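/- arXiv:1102.4267 — 5 statements merged into one kernel-verified Lean document; each statement's English description precedes it below -/
import Mathlib

section
/- Let D = D_{2^n} × C_{2^m} with n ≥ 3 and m ≥ 0. Then the automorphism group Aut(D) is a 2-group, i.e., |Aut(D)| is a power of 2. -/
/-!
Let `ψ` be an automorphism of odd order `b` of a finite 2-group. If `ψ x = f * x` with `f` fixed,
then `x = ψ^b x = f^b * x`, so `f = 1`; if `ψ x = x ^ e`, then `e ^ b ≡ 1` modulo the order `2^s`
of `x`, and since the units of `ZMod (2^s)` form a 2-group, `e ≡ 1`. In `D_{2^n} × C_{2^m}` every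
commutator lies in `⟨(r 2, 1)⟩`, so `ψ` maps `(r 2, 1)` to a power of itself and fixes it. For
`n ≥ 3` the central involutions `(r d, 1)` are powers of `(r 2, 1)`, and the unique involution of
the cyclic factor is then fixed too. Writing the images of the generators `(r 1, 1)`, `(sr 0, 1)`
and `(1, ofAdd 1)` as fixed elements times the generators shows that `ψ` fixes all three.
-/

/-- `D_{2^n} × C_{2^m}`. -/
abbrev DC (n m : ℕ) : Type :=
  DihedralGroup (2 ^ (n - 1)) × Multiplicative (ZMod (2 ^ m))

open DihedralGroup
open scoped commutatorElement

theorem ZMod.eq_one_of_pow_eq_one_of_odd {s b : ℕ} (hb : Odd b) {u : ZMod (2 ^ s)}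
    (h : u ^ b = 1) : u = 1 := by
  cases s with
  | zero => exact Subsingleton.elim (α := ZMod 1) _ _
  | succ t =>
    let v := (IsUnit.of_pow_eq_one h hb.pos.ne').unit
    have hvb : v ^ b = 1 := Units.ext (by simpa [v] using h)
    have hvt : v ^ 2 ^ t = 1 := by
      simpa [Nat.totient_prime_pow_succ Nat.prime_two] using ZMod.pow_totient v
    have hv : v = 1 := by
      simpa [((Nat.coprime_two_right.mpr hb).pow_right t).gcd_eq_one] using
        (pow_gcd_eq_one (a := v)).mpr ⟨hvb, hvt⟩
    simpa [v] using congrArg Units.val hv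

theorem ZMod.two_ne_zero_of_two_le {k : ℕ} (hk : 2 ≤ k) : (2 : ZMod (2 ^ k)) ≠ 0 := by
  have h4 : 2 < 2 ^ k := by
    calc 2 < 2 ^ 2 := by norm_num
      _ ≤ 2 ^ k := Nat.pow_le_pow_right two_pos hk
  exact_mod_cast (ZMod.natCast_eq_zero_iff 2 (2 ^ k)).not.mpr (Nat.not_dvd_of_pos_of_lt two_pos h4)

theorem ZMod.exists_eq_two_mul_of_two_mul_eq_zero {k : ℕ} (hk : 2 ≤ k) {d : ZMod (2 ^ k)}
    (hd : 2 * d = 0) : ∃ i, d = 2 * i := by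
  have hdvd : 2 * 2 ^ (k - 1) ∣ 2 * d.val := by
    rw [← pow_succ', Nat.sub_add_cancel (by omega), ← ZMod.natCast_eq_zero_iff]
    simpa using hd
  obtain ⟨w, hw⟩ :=
    (dvd_pow_self 2 (by omega : k - 1 ≠ 0)).trans (Nat.dvd_of_mul_dvd_mul_left two_pos hdvd)
  exact ⟨w, by rw [← ZMod.natCast_zmod_val d, hw]; push_cast; rfl⟩

theorem IsCyclic.eq_of_sq_eq_one {α : Type*} [Group α] [Finite α] [IsCyclic α] {a b : α}
    (ha : a ^ 2 = 1) (hb : b ^ 2 = 1) (ha1 : a ≠ 1) (hb1 : b ≠ 1) : a = b := by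
  classical
  have := Fintype.ofFinite α
  by_contra hab
  have h3 : ({1, a, b} : Finset α).card = 3 :=
    Finset.card_eq_three.mpr ⟨1, a, b, ha1.symm, hb1.symm, hab, rfl⟩
  have hsub : ({1, a, b} : Finset α) ⊆ ({x | x ^ 2 = 1} : Finset α) := by
    intro x hx
    simp only [Finset.mem_insert, Finset.mem_singleton] at hx
    rcases hx with rfl | rfl | rfl <;> simp [*]
  have := (Finset.card_le_card hsub).trans (IsCyclic.card_pow_eq_one_le two_pos)
  omega

namespace MulAut

variable {G : Type*} [Group G] (ψ : MulAut G)

theorem pow_apply_of_apply_eq_mul {f x : G} (hf : ψ f = f) (hx : ψ x = f * x) (j : ℕ) :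
    (ψ ^ j) x = f ^ j * x := by
  induction j with
  | zero => simp
  | succ j ih =>
    rw [pow_succ', mul_apply, ih, map_mul, map_pow, hf, hx, ← mul_assoc, ← pow_succ]

theorem pow_apply_of_apply_eq_pow {x : G} {e : ℕ} (hx : ψ x = x ^ e) (j : ℕ) :
    (ψ ^ j) x = x ^ e ^ j := by
  induction j with
  | zero => simp
  | succ j ih => rw [pow_succ, mul_apply, hx, map_pow, ih, ← pow_mul, ← pow_succ]

theorem commute_apply_of_forall_commute {g : G} (hg : ∀ h, Commute g h) (h : G) :
    Commute (ψ g) h := by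
  simpa using (hg (ψ.symm h)).map ψ

variable {ψ}

theorem apply_eq_self_of_apply_eq_mul {b : ℕ} (hψ : ψ ^ b = 1) {f x : G} (hf : ψ f = f)
    (hx : ψ x = f * x) (hcop : (orderOf f).Coprime b) : ψ x = x := by
  have hfb : f ^ b = 1 := by
    simpa [hψ] using pow_apply_of_apply_eq_mul ψ hf hx b
  rw [hx, orderOf_eq_one_iff.mp (hcop.eq_one_of_dvd (orderOf_dvd_of_pow_eq_one hfb)), one_mul]

theorem apply_eq_self_of_apply_eq_mul_right {b : ℕ} (hψ : ψ ^ b = 1) {f x : G} (hf : ψ f = f)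
    (hx : ψ x = x * f) (hcop : (orderOf f).Coprime b) : ψ x = x := by
  have hinv : ψ x⁻¹ = x⁻¹ :=
    apply_eq_self_of_apply_eq_mul hψ (by rw [map_inv, hf]) (by rw [map_inv, hx, mul_inv_rev])
      (by rwa [orderOf_inv])
  rwa [map_inv, inv_inj] at hinv

theorem apply_eq_self_of_apply_eq_pow {b : ℕ} (hψ : ψ ^ b = 1) (hb : Odd b) {x : G} {s e : ℕ}
    (hxs : orderOf x = 2 ^ s) (hx : ψ x = x ^ e) : ψ x = x := by
  have hxb : x ^ e ^ b = x ^ 1 := by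
    simpa [hψ] using (pow_apply_of_apply_eq_pow ψ hx b).symm
  rw [pow_eq_pow_iff_modEq, hxs, ← ZMod.natCast_eq_natCast_iff] at hxb
  have he : (e : ZMod (2 ^ s)) = 1 := ZMod.eq_one_of_pow_eq_one_of_odd hb (by exact_mod_cast hxb)
  calc ψ x = x ^ e := hx
    _ = x ^ 1 := pow_eq_pow_iff_modEq.mpr
      (by rw [hxs, ← ZMod.natCast_eq_natCast_iff]; simpa using he)
    _ = x := pow_one x

end MulAut

theorem DihedralGroup.exists_commutatorElement_eq {N : ℕ} (g h : DihedralGroup N) :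
    ∃ t, ⁅g, h⁆ = r (2 * t) := by
  rcases g with i | i <;> rcases h with j | j <;>
    simp only [commutatorElement_def, inv_r, inv_sr, r_mul_r, r_mul_sr, sr_mul_r, sr_mul_sr, r.injEq]
  exacts [⟨0, by ring⟩, ⟨i, by ring⟩, ⟨-j, by ring⟩, ⟨j - i, by ring⟩]

namespace DC

variable {n m b : ℕ} {ψ : MulAut (DC n m)}

theorem isPGroup : IsPGroup 2 (DC n m) :=
  IsPGroup.of_card (n := n - 1 + 1 + m) (by simp [DihedralGroup.card]; ring)

theorem orderOf_coprime (hb : Odd b) (g : DC n m) : (orderOf g).Coprime b :=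
  isPGroup.orderOf_coprime (Nat.coprime_two_left.mpr hb) g

theorem exists_commutatorElement_eq (g h : DC n m) : ∃ t, ⁅g, h⁆ = (r (2 * t), 1) := by
  obtain ⟨t, ht⟩ := DihedralGroup.exists_commutatorElement_eq g.1 h.1
  exact ⟨t, Prod.ext ht (commutatorElement_eq_one_iff_commute.mpr (Commute.all _ _))⟩

theorem mk_r_eq_pow (i : ZMod (2 ^ (n - 1))) : ((r i, 1) : DC n m) = (r 1, 1) ^ i.val := by
  simp [Prod.pow_mk]

theorem mk_one_eq_pow (c : Multiplicative (ZMod (2 ^ m))) :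
    ((1, c) : DC n m) = (1, Multiplicative.ofAdd 1) ^ (Multiplicative.toAdd c).val := by
  rw [Prod.pow_mk, one_pow, ← ofAdd_nsmul, nsmul_one, ZMod.natCast_zmod_val, ofAdd_toAdd]

theorem exists_eq_mk_r_of_commute (hn : 3 ≤ n) {g : DC n m} (hX : Commute g (r 1, 1))
    (hY : Commute g (sr 0, 1)) : ∃ d c, g = (r d, c) ∧ 2 * d = 0 := by
  obtain ⟨g, c⟩ := g
  cases g with
  | r d =>
    refine ⟨d, c, rfl, ?_⟩
    have h := congrArg Prod.fst hY.eq
    simp only [Prod.mk_mul_mk, r_mul_sr, sr_mul_r, sr.injEq] at h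
    linear_combination -h
  | sr d =>
    have h := congrArg Prod.fst hX.eq
    simp only [Prod.mk_mul_mk, r_mul_sr, sr_mul_r, sr.injEq] at h
    exact absurd (by linear_combination h) (ZMod.two_ne_zero_of_two_le (by omega : 2 ≤ n - 1))

theorem apply_r_two_mul (hψ : ψ ^ b = 1) (hb : Odd b) (i : ZMod (2 ^ (n - 1))) :
    ψ (r (2 * i), 1) = (r (2 * i), 1) := by
  have hr2 : ψ (r 2, 1) = (r 2, 1) := by
    obtain ⟨t, ht⟩ := exists_commutatorElement_eq (ψ ((r 1, 1) : DC n m)) (ψ ((sr 0, 1) : DC n m))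
    obtain ⟨s, hs⟩ := IsPGroup.iff_orderOf.mp isPGroup ((r 2, 1) : DC n m)
    refine MulAut.apply_eq_self_of_apply_eq_pow hψ hb hs (e := t.val) ?_
    have hcomm : ((r 2, 1) : DC n m) = ⁅((r 1, 1) : DC n m), (sr 0, 1)⁆ := by
      simp only [commutatorElement_def, Prod.mk_mul_mk, Prod.inv_mk, inv_r, inv_sr, r_mul_sr,
        sr_mul_r, sr_mul_sr, mul_one, inv_one, Prod.mk.injEq, r.injEq, and_true]
      ring
    rw [hcomm, map_commutatorElement, ht, ← hcomm, Prod.pow_mk, r_pow, one_pow,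
      ZMod.natCast_zmod_val]
  have hpow : ((r (2 * i), 1) : DC n m) = (r 2, 1) ^ i.val := by
    rw [Prod.pow_mk, r_pow, one_pow, ZMod.natCast_zmod_val]
  rw [hpow, map_pow, hr2]

theorem apply_r_of_two_mul_eq_zero (hn : 3 ≤ n) (hψ : ψ ^ b = 1) (hb : Odd b)
    {d : ZMod (2 ^ (n - 1))} (hd : 2 * d = 0) : ψ (r d, 1) = (r d, 1) := by
  obtain ⟨i, rfl⟩ := ZMod.exists_eq_two_mul_of_two_mul_eq_zero (by omega) hd
  exact apply_r_two_mul hψ hb i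

theorem apply_one_of_sq_eq_one (hn : 3 ≤ n) (hψ : ψ ^ b = 1) (hb : Odd b)
    {c : Multiplicative (ZMod (2 ^ m))} (hc : c ^ 2 = 1) : ψ (1, c) = (1, c) := by
  rcases eq_or_ne c 1 with rfl | hc1
  · exact map_one ψ
  have hcen : ∀ h : DC n m, Commute (ψ (1, c)) h :=
    MulAut.commute_apply_of_forall_commute ψ fun h =>
      Prod.commute_iff.mpr ⟨Commute.one_left _, Commute.all _ _⟩
  obtain ⟨d, c', hψc, hd⟩ := exists_eq_mk_r_of_commute hn (hcen _) (hcen _)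
  have hfix := apply_r_of_two_mul_eq_zero hn hψ hb hd
  have hc' : c' ≠ 1 := by
    rintro rfl
    exact hc1 (congrArg Prod.snd (ψ.injective (hψc.trans hfix.symm)))
  have hc'2 : c' ^ 2 = 1 := by
    have h := congrArg Prod.snd (map_pow ψ (1, c) 2)
    rw [hψc, Prod.pow_mk, one_pow, hc, ← Prod.one_eq_mk, map_one] at h
    exact h.symm
  refine MulAut.apply_eq_self_of_apply_eq_mul hψ hfix ?_ (orderOf_coprime hb _)
  rw [hψc, IsCyclic.eq_of_sq_eq_one hc'2 hc hc' hc1, Prod.mk_mul_mk, one_mul, mul_one]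

theorem apply_mk_of_apply_r (hn : 3 ≤ n) (hψ : ψ ^ b = 1) (hb : Odd b) {d : ZMod (2 ^ (n - 1))}
    {c : Multiplicative (ZMod (2 ^ m))} (hd : ψ (r d, 1) = (r d, 1)) (hc : c ^ 2 = 1) :
    ψ (r d, c) = (r d, c) := by
  have hsplit : ((r d, c) : DC n m) = (r d, 1) * (1, c) := by simp
  rw [hsplit, map_mul, hd, apply_one_of_sq_eq_one hn hψ hb hc]

theorem apply_r_one (hn : 3 ≤ n) (hψ : ψ ^ b = 1) (hb : Odd b) : ψ (r 1, 1) = (r 1, 1) := by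
  obtain ⟨⟨g, c⟩, hX⟩ : ∃ p, ψ ((r 1, 1) : DC n m) = p := ⟨_, rfl⟩
  have hsq : ((g, c) : DC n m) ^ 2 = (r 2, 1) := by
    simpa [← hX, ← map_pow, Prod.pow_mk, r_one_pow] using apply_r_two_mul hψ hb 1
  rw [Prod.pow_mk, Prod.mk.injEq] at hsq
  cases g with
  | sr a =>
    rw [sq, sr_mul_self, one_def, r.injEq] at hsq
    exact absurd hsq.1.symm (ZMod.two_ne_zero_of_two_le (by omega))
  | r a =>
    rw [r_pow, r.injEq] at hsq
    have ha : 2 * (a - 1) = 0 := by push_cast at hsq; linear_combination hsq.1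
    refine MulAut.apply_eq_self_of_apply_eq_mul hψ
      (apply_mk_of_apply_r hn hψ hb (apply_r_of_two_mul_eq_zero hn hψ hb ha) hsq.2) ?_
      (orderOf_coprime hb _)
    rw [hX, Prod.mk_mul_mk, r_mul_r, sub_add_cancel, mul_one]

theorem apply_r (hn : 3 ≤ n) (hψ : ψ ^ b = 1) (hb : Odd b) (i : ZMod (2 ^ (n - 1))) :
    ψ (r i, 1) = (r i, 1) := by
  rw [mk_r_eq_pow, map_pow, apply_r_one hn hψ hb]

theorem apply_sr_zero (hn : 3 ≤ n) (hψ : ψ ^ b = 1) (hb : Odd b) : ψ (sr 0, 1) = (sr 0, 1) := by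
  obtain ⟨⟨g, c⟩, hY⟩ : ∃ p, ψ ((sr 0, 1) : DC n m) = p := ⟨_, rfl⟩
  have hncomm : ¬Commute ((g, c) : DC n m) (r 1, 1) := by
    intro h
    have h' := congrArg Prod.fst ((h.map ψ.symm).eq)
    rw [← hY, ← apply_r_one hn hψ hb] at h'
    simp only [MulEquiv.symm_apply_apply, Prod.mk_mul_mk, sr_mul_r, r_mul_sr, sr.injEq] at h'
    exact ZMod.two_ne_zero_of_two_le (by omega : 2 ≤ n - 1) (by linear_combination h')
  cases g with
  | r a =>
    exact absurd (Prod.commute_iff.mpr ⟨by simp [commute_iff_eq, add_comm], Commute.all _ _⟩) hncomm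
  | sr a =>
    have hc : c ^ 2 = 1 := by
      have h := congrArg Prod.snd (map_pow ψ (sr 0, 1) 2)
      rw [hY, Prod.pow_mk, Prod.pow_mk, sq (sr 0), sr_mul_self, one_pow, ← Prod.one_eq_mk,
        map_one] at h
      exact h.symm
    refine MulAut.apply_eq_self_of_apply_eq_mul_right hψ
      (apply_mk_of_apply_r hn hψ hb (apply_r hn hψ hb a) hc) ?_ (orderOf_coprime hb _)
    rw [hY, Prod.mk_mul_mk, sr_mul_r, zero_add, one_mul]

theorem apply_one_ofAdd_one (hn : 3 ≤ n) (hψ : ψ ^ b = 1) (hb : Odd b) :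
    ψ (1, Multiplicative.ofAdd 1) = (1, Multiplicative.ofAdd 1) := by
  set z : DC n m := (1, Multiplicative.ofAdd 1)
  have hcen : ∀ h : DC n m, Commute (ψ z) h :=
    MulAut.commute_apply_of_forall_commute ψ fun h =>
      Prod.commute_iff.mpr ⟨Commute.one_left _, Commute.all _ _⟩
  obtain ⟨d, c, hz, hd⟩ := exists_eq_mk_r_of_commute hn (hcen _) (hcen _)
  have hz2 : ψ (z ^ 2) = z ^ 2 := by
    obtain ⟨s, hs⟩ := IsPGroup.iff_orderOf.mp isPGroup (z ^ 2)
    refine MulAut.apply_eq_self_of_apply_eq_pow hψ hb hs (e := (Multiplicative.toAdd c).val) ?_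
    rw [map_pow, hz, ← pow_right_comm, ← mk_one_eq_pow, Prod.pow_mk, Prod.pow_mk, r_pow, one_pow,
      Nat.cast_ofNat, mul_comm, hd, r_zero]
  have hc : (c * (Multiplicative.ofAdd 1)⁻¹) ^ 2 = 1 := by
    rw [map_pow, hz, Prod.pow_mk, Prod.pow_mk] at hz2
    rw [mul_pow, (Prod.mk.inj hz2).2, inv_pow, mul_inv_cancel]
  refine MulAut.apply_eq_self_of_apply_eq_mul hψ
    (apply_mk_of_apply_r hn hψ hb (apply_r_of_two_mul_eq_zero hn hψ hb hd) hc) ?_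
    (orderOf_coprime hb _)
  rw [hz, Prod.mk_mul_mk, mul_one, inv_mul_cancel_right]

theorem eq_one_of_pow_eq_one (hn : 3 ≤ n) (hψ : ψ ^ b = 1) (hb : Odd b) : ψ = 1 := by
  ext1 ⟨g, c⟩
  have hc : ψ (1, c) = (1, c) := by
    rw [mk_one_eq_pow, map_pow, apply_one_ofAdd_one hn hψ hb]
  have hg : ψ (g, 1) = (g, 1) := by
    cases g with
    | r i => exact apply_r hn hψ hb i
    | sr i =>
      have hsplit : ((sr i, 1) : DC n m) = (sr 0, 1) * (r i, 1) := by simp [sr_mul_r]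
      rw [hsplit, map_mul, apply_sr_zero hn hψ hb, apply_r hn hψ hb]
  have hsplit : ((g, c) : DC n m) = (g, 1) * (1, c) := by simp
  rw [MulAut.one_apply, hsplit, map_mul, hg, hc]

end DC

theorem stmt_1 (n m : ℕ) (hn : 3 ≤ n) :
    IsPGroup 2 (MulAut (DC n m)) := by
  have : Finite (MulAut (DC n m)) := inferInstanceAs (Finite (DC n m ≃* DC n m))
  intro φ
  obtain ⟨a, b, hb, hab⟩ := Nat.exists_eq_two_pow_mul_odd (orderOf_pos φ).ne'
  refine ⟨a, DC.eq_one_of_pow_eq_one hn ?_ hb⟩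
  rw [← pow_mul, ← hab, pow_orderOf_eq_one]
end

section
/- Let D = ⟨x, y, z⟩ ≅ D_{2^n} × C_{2^m} with n ≥ 3, and let S ≤ D be a subgroup isomorphic to C_2 × C_2 × C_{2^m}. Then z ∈ S. -/
open DihedralGroup

theorem ZMod.ncard_setOf_add_self_eq_zero_le (N : ℕ) [NeZero N] :
    {j : ZMod N | j + j = 0}.ncard ≤ 2 := by
  classical
  rw [Set.ncard_eq_toFinset_card', Set.toFinset_ofPred]
  simpa only [two_nsmul] using IsAddCyclic.card_nsmul_eq_zero_le (α := ZMod N) two_pos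

theorem DihedralGroup.card_centralizer_sr_le {N : ℕ} [NeZero N] (i : ZMod N) :
    Nat.card (Subgroup.centralizer {sr i}) ≤ 4 := by
  set T := {j : ZMod N | j + j = 0}
  have hsub : (Subgroup.centralizer {sr i} : Set (DihedralGroup N)) ⊆
      r '' T ∪ (fun k => sr (i + k)) '' T := by
    intro x hx
    rw [SetLike.mem_coe, Subgroup.mem_centralizer_singleton_iff] at hx
    cases x with
    | r j =>
      refine Or.inl ⟨j, ?_, rfl⟩
      simp only [sr_mul_r, r_mul_sr, sr.injEq] at hx
      simp only [T, Set.mem_ofPred_eq]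
      linear_combination -hx
    | sr j =>
      refine Or.inr ⟨j - i, ?_, by simp⟩
      simp only [sr_mul_sr, r.injEq] at hx
      simp only [T, Set.mem_ofPred_eq]
      linear_combination -hx
  calc Nat.card (Subgroup.centralizer {sr i})
      ≤ (r '' T ∪ (fun k => sr (i + k)) '' T).ncard := by
        rw [← Nat.card_coe_set_eq]; exact Set.ncard_le_ncard hsub
    _ ≤ T.ncard + T.ncard :=
        (Set.ncard_union_le _ _).trans (add_le_add Set.ncard_image_le Set.ncard_image_le)
    _ ≤ 2 + 2 := by gcongr <;> exact ZMod.ncard_setOf_add_self_eq_zero_le N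

theorem Prod.ncard_setOf_pow_eq_one {A B : Type*} [Monoid A] [Monoid B] (k : ℕ) :
    {p : A × B | p ^ k = 1}.ncard = {a : A | a ^ k = 1}.ncard * {b : B | b ^ k = 1}.ncard := by
  rw [← Set.ncard_prod]
  congr 1
  ext p
  simp [Prod.ext_iff]

theorem MulEquiv.ncard_setOf_pow_eq_one {A B : Type*} [Monoid A] [Monoid B] (φ : A ≃* B) (k : ℕ) :
    {a : A | a ^ k = 1}.ncard = {b : B | b ^ k = 1}.ncard := by
  rw [← Set.ncard_image_of_injective _ φ.injective]
  congr 1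
  ext b
  refine ⟨?_, fun hb => ⟨φ.symm b, by simpa [← map_pow] using hb, φ.apply_symm_apply b⟩⟩
  rintro ⟨a, ha, rfl⟩
  simp_all [← map_pow]

theorem DihedralGroup.ncard_sq_eq_one_le_of_forall_fst_ne_sr {N : ℕ} [NeZero N] {C : Type*}
    [Group C] [Finite C] (S : Subgroup (DihedralGroup N × C)) (hS : ∀ s ∈ S, ∀ i, s.1 ≠ sr i) :
    {s : S | s ^ 2 = 1}.ncard ≤ 2 * {c : C | c ^ 2 = 1}.ncard := by
  have hsub : Subtype.val '' {s : S | s ^ 2 = 1} ⊆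
      (r '' {j : ZMod N | j + j = 0}) ×ˢ {c : C | c ^ 2 = 1} := by
    rintro _ ⟨⟨s, hs⟩, hsq, rfl⟩
    obtain ⟨j, hj⟩ : ∃ j, s.1 = r j := by
      cases h : s.1 with
      | r j => exact ⟨j, rfl⟩
      | sr i => exact absurd h (hS s hs i)
    have hsq' : s.1 ^ 2 = 1 ∧ s.2 ^ 2 = 1 := by
      simpa [Prod.ext_iff] using congrArg Subtype.val hsq
    rw [hj, sq, r_mul_r, one_def, r.injEq] at hsq'
    exact ⟨⟨j, hsq'.1, hj.symm⟩, hsq'.2⟩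
  calc {s : S | s ^ 2 = 1}.ncard
      = (Subtype.val '' {s : S | s ^ 2 = 1}).ncard :=
        (Set.ncard_image_of_injective _ Subtype.val_injective).symm
    _ ≤ (r '' {j : ZMod N | j + j = 0}).ncard * {c : C | c ^ 2 = 1}.ncard := by
        rw [← Set.ncard_prod]; exact Set.ncard_le_ncard hsub
    _ ≤ 2 * {c : C | c ^ 2 = 1}.ncard := by
        gcongr
        exact (Set.ncard_image_le (Set.toFinite _)).trans (ZMod.ncard_setOf_add_self_eq_zero_le N)

theorem DihedralGroup.exists_fst_eq_sr {N : ℕ} [NeZero N] {C : Type*} [Group C] [Finite C]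
    (S : Subgroup (DihedralGroup N × C))
    (φ : S ≃* Multiplicative (ZMod 2) × Multiplicative (ZMod 2) × C) :
    ∃ s ∈ S, ∃ i, s.1 = sr i := by
  by_contra! h
  have hC : 0 < {c : C | c ^ 2 = 1}.ncard := (Set.ncard_pos (Set.toFinite _)).2 ⟨1, one_pow 2⟩
  have hZ2 : {a : Multiplicative (ZMod 2) | a ^ 2 = 1}.ncard = 2 := by
    have : {a : Multiplicative (ZMod 2) | a ^ 2 = 1} = Set.univ :=
      Set.eq_univ_of_forall (by decide)
    rw [this, Set.ncard_univ]
    exact Nat.card_zmod 2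
  have := ncard_sq_eq_one_le_of_forall_fst_ne_sr S h
  rw [φ.ncard_setOf_pow_eq_one, Prod.ncard_setOf_pow_eq_one, Prod.ncard_setOf_pow_eq_one,
    hZ2] at this
  omega

theorem DihedralGroup.card_map_fst_le_four {N : ℕ} [NeZero N] {C : Type*} [Group C]
    (S : Subgroup (DihedralGroup N × C)) (hS : ∀ a ∈ S, ∀ b ∈ S, Commute a b)
    {s₀ : DihedralGroup N × C} (hs₀ : s₀ ∈ S) {i : ZMod N} (hi : s₀.1 = sr i) :
    Nat.card (S.map (MonoidHom.fst (DihedralGroup N) C)) ≤ 4 := by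
  refine le_trans (Subgroup.card_le_of_le ?_) (card_centralizer_sr_le i)
  rintro _ ⟨s, hs, rfl⟩
  rw [Subgroup.mem_centralizer_singleton_iff, ← hi]
  exact congrArg Prod.fst (hS s hs s₀ hs₀)

theorem Subgroup.ker_le_of_card_ker_mul_card_map_le {G H : Type*} [Group G] [Group H]
    (f : G →* H) (S : Subgroup G) [Finite S] [Finite f.ker]
    (h : Nat.card f.ker * Nat.card (S.map f) ≤ Nat.card S) : f.ker ≤ S := by
  have hcard : Nat.card ↥(f.ker ⊓ S) * Nat.card (S.map f) = Nat.card S := by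
    rw [← relIndex_ker, ← inf_relIndex_right, ← relIndex_bot_left, ← relIndex_bot_left,
      relIndex_mul_relIndex _ _ _ bot_le inf_le_right]
  have hmap : 0 < Nat.card (S.map f) := Nat.pos_of_mul_pos_left (hcard ▸ Nat.card_pos)
  rw [← hcard] at h
  exact inf_eq_left.1 (eq_of_le_of_card_ge inf_le_left (Nat.le_of_mul_le_mul_right h hmap))

theorem DihedralGroup.ker_fst_le_of_mulEquiv {N : ℕ} [NeZero N] {C : Type*} [CommGroup C]
    [Finite C] (S : Subgroup (DihedralGroup N × C))
    (φ : S ≃* Multiplicative (ZMod 2) × Multiplicative (ZMod 2) × C) :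
    (MonoidHom.fst (DihedralGroup N) C).ker ≤ S := by
  obtain ⟨s₀, hs₀, i, hi⟩ := exists_fst_eq_sr S φ
  have hcomm : ∀ a ∈ S, ∀ b ∈ S, Commute a b := fun a ha b hb =>
    congrArg Subtype.val (φ.injective (by simp only [map_mul, mul_comm]) :
      (⟨a, ha⟩ * ⟨b, hb⟩ : S) = ⟨b, hb⟩ * ⟨a, ha⟩)
  have hker : Nat.card (MonoidHom.fst (DihedralGroup N) C).ker = Nat.card C := by
    rw [MonoidHom.ker_fst, Nat.card_congr (Subgroup.prodEquiv ⊥ ⊤).toEquiv, Nat.card_prod,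
      Subgroup.card_bot, Subgroup.card_top, one_mul]
  have hS : Nat.card S = Nat.card C * 4 := by
    rw [Nat.card_congr φ.toEquiv, Nat.card_prod, Nat.card_prod]
    simp only [Nat.card_congr Multiplicative.toAdd, Nat.card_zmod]
    ring
  apply Subgroup.ker_le_of_card_ker_mul_card_map_le
  rw [hker, hS]
  exact Nat.mul_le_mul_left _ (card_map_fst_le_four S hcomm hs₀ hi)

theorem stmt_4_general (n m : ℕ)
    (z : DC n m) (hz : z = (1, Multiplicative.ofAdd 1))
    (S : Subgroup (DC n m))
    (hS : Nonempty (S ≃* (Multiplicative (ZMod 2) × Multiplicative (ZMod 2) ×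
      Multiplicative (ZMod (2 ^ m))))) :
    z ∈ S := by
  obtain ⟨φ⟩ := hS
  apply DihedralGroup.ker_fst_le_of_mulEquiv S φ
  simp [hz, Subgroup.mem_prod]

theorem stmt_4 (n m : ℕ) (hn : 3 ≤ n)
    (z : DC n m) (hz : z = (1, Multiplicative.ofAdd 1))
    (S : Subgroup (DC n m))
    (hS : Nonempty (S ≃* (Multiplicative (ZMod 2) × Multiplicative (ZMod 2) ×
      Multiplicative (ZMod (2 ^ m))))) :
    z ∈ S :=
  stmt_4_general n m z hz S hS
end

section
/- Let D = ⟨x, y, z⟩ ≅ D_{2^n} × C_{2^m} with n ≥ 3, and set Q₁ = ⟨x^{2^{n-2}}, y, z⟩ and Q₂ = ⟨x^{2^{n-2}}, x y, z⟩. Then every subgroup of D isomorphic to C_2 × C_2 × C_{2^m} is conjugate in D to Q₁ or to Q₂, and Q₁ and Q₂ are not conjugate in D. -/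
open Pointwise

/-! A subgroup `S ≅ C₂ × C₂ × C_{2^m}` has four times as many solutions of `g² = 1` as
`C_{2^m}`, while the rotation subgroup `⟨r⟩ × C_{2^m}` has at most twice as many, so `S`
contains some `(sr a, c)`. Being abelian, `S` lies in the centralizer of `(sr a, 1)`, which is
`{1, r h, sr a, sr (a + h)} × C_{2^m}` with `h = 2^{n-2}` and has at most `|S|` elements;
so `S` is this centralizer. Conjugating by `r t` shifts `a` by `-2t`, which brings `a` to `0`
or `-1`, giving `Q₁` and `Q₂`. Conversely every conjugate of `sr 0` is some `sr (2t)`, and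
since `4 ∣ 2^{n-1}` a reflection `sr (2t)` never commutes with `sr (-1)`; hence `Q₁` and `Q₂`
are not conjugate. -/

open DihedralGroup

theorem ZMod.add_self_eq_zero_iff_of_eq_two_mul {N M : ℕ} (hN : N = 2 * M) {i : ZMod N} :
    i + i = 0 ↔ i = 0 ∨ i = M := by
  subst hN
  obtain ⟨k, rfl⟩ := ZMod.intCast_surjective i
  have hM : ((M : ℤ) : ZMod (2 * M)) = M := by simp
  rw [← Int.cast_add, ← hM, ← sub_eq_zero (b := ((M : ℤ) : ZMod (2 * M))), ← Int.cast_sub]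
  simp only [ZMod.intCast_zmod_eq_zero_iff_dvd]
  push_cast
  constructor
  · rintro ⟨q, hq⟩
    obtain ⟨s, rfl | rfl⟩ := Int.even_or_odd' q
    · left; exact ⟨s, by linarith⟩
    · right; exact ⟨s, by linarith⟩
  · rintro (⟨q, hq⟩ | ⟨q, hq⟩)
    · exact ⟨2 * q, by linarith⟩
    · exact ⟨2 * q + 1, by linarith⟩

theorem ZMod.exists_eq_add_self_or_eq_add_self_sub_one {N : ℕ} [NeZero N] (a : ZMod N) :
    ∃ t : ZMod N, a = t + t ∨ a = t + t - 1 := by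
  obtain ⟨j, hj | hj⟩ := Nat.even_or_odd' a.val
  · exact ⟨j, Or.inl (by rw [← ZMod.natCast_zmod_val a, hj]; push_cast; ring)⟩
  · exact ⟨j + 1, Or.inr (by rw [← ZMod.natCast_zmod_val a, hj]; push_cast; ring)⟩

theorem Subgroup.centralizer_singleton_mk_eq_prod {G C : Type*} [Group G] [CommGroup C]
    (x : G) (c : C) : centralizer {(x, c)} = (centralizer {x}).prod ⊤ := by
  ext p
  simp only [mem_centralizer_singleton_iff, mem_prod, mem_top, and_true, ← commute_iff_eq,
    Prod.commute_iff, Commute.all, and_true]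

theorem MulAut.conj_smul_centralizer_singleton {G : Type*} [Group G] (g x : G) :
    conj g • Subgroup.centralizer {x} = Subgroup.centralizer {g * x * g⁻¹} := by
  ext p
  rw [Subgroup.mem_pointwise_smul_iff_inv_smul_mem, MulAut.smul_def, conj_inv_apply,
    Subgroup.mem_centralizer_singleton_iff, Subgroup.mem_centralizer_singleton_iff]
  constructor <;> intro h
  · calc p * (g * x * g⁻¹) = g * (g⁻¹ * p * g * x) * g⁻¹ := by group
      _ = g * (x * (g⁻¹ * p * g)) * g⁻¹ := by rw [h]
      _ = g * x * g⁻¹ * p := by group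
  · calc g⁻¹ * p * g * x = g⁻¹ * (p * (g * x * g⁻¹)) * g := by group
      _ = g⁻¹ * (g * x * g⁻¹ * p) * g := by rw [h]
      _ = x * (g⁻¹ * p * g) := by group

namespace DihedralGroup

variable {N : ℕ}

theorem commute_r_sr_iff (i a : ZMod N) : Commute (r i) (sr a) ↔ i + i = 0 := by
  rw [commute_iff_eq, r_mul_sr, sr_mul_r, sr.injEq, sub_eq_add_neg, add_right_inj,
    neg_eq_iff_add_eq_zero]

theorem commute_sr_sr_iff (j a : ZMod N) : Commute (sr j) (sr a) ↔ (j - a) + (j - a) = 0 := by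
  rw [commute_iff_eq, sr_mul_sr, sr_mul_sr, r.injEq, ← neg_sub, neg_eq_iff_add_eq_zero, add_comm]

theorem commute_sr_iff {M : ℕ} (hN : N = 2 * M) {g : DihedralGroup N} {a : ZMod N} :
    Commute g (sr a) ↔ g = 1 ∨ g = r M ∨ g = sr a ∨ g = sr (a + (M : ZMod N)) := by
  rcases g with i | j
  · rw [commute_r_sr_iff, ZMod.add_self_eq_zero_iff_of_eq_two_mul hN]
    simp only [one_def, r.injEq, reduceCtorEq, or_false]
  · rw [commute_sr_sr_iff, ZMod.add_self_eq_zero_iff_of_eq_two_mul hN, sub_eq_zero,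
      sub_eq_iff_eq_add']
    simp only [one_def, sr.injEq, reduceCtorEq, false_or]

theorem card_centralizer_sr_le_s5 {M : ℕ} (hN : N = 2 * M) (a : ZMod N) :
    Nat.card (Subgroup.centralizer {sr a}) ≤ 4 := by
  classical
  have hsub : (Subgroup.centralizer {sr a} : Set (DihedralGroup N)) ⊆
      ↑({1, r M, sr a, sr (a + (M : ZMod N))} : Finset (DihedralGroup N)) := fun g hg => by
    simpa using (commute_sr_iff hN).mp (Subgroup.mem_centralizer_singleton_iff.mp hg)
  calc Nat.card (Subgroup.centralizer {sr a})
      ≤ Nat.card (({1, r M, sr a, sr (a + (M : ZMod N))} : Finset (DihedralGroup N)) :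
          Set (DihedralGroup N)) := Nat.card_mono (Finset.finite_toSet _) hsub
    _ ≤ 4 := by rw [Nat.card_coe_set_eq, Set.ncard_coe_finset]; exact Finset.card_le_four

theorem conj_r_sr (t a : ZMod N) : r t * sr a * (r t)⁻¹ = sr (a - t - t) := by
  rw [inv_r, r_mul_sr, sr_mul_r, sub_eq_add_neg (a - t)]

theorem conj_sr_sr (u a : ZMod N) : sr u * sr a * (sr u)⁻¹ = sr (u + u - a) := by
  rw [inv_sr, sr_mul_sr, r_mul_sr]; ring_nf

theorem exists_conj_sr_zero (g : DihedralGroup N) :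
    ∃ t : ZMod N, g * sr 0 * g⁻¹ = sr (t + t) := by
  rcases g with t | u
  · exact ⟨-t, by rw [conj_r_sr]; ring_nf⟩
  · exact ⟨u, by rw [conj_sr_sr, sub_zero]⟩

theorem not_commute_sr_add_self_sr_add_self_sub_one (h4 : 4 ∣ N) (t u : ZMod N) :
    ¬Commute (sr (t + t)) (sr (u + u - 1)) := by
  rw [commute_sr_sr_iff]
  intro h
  have h' := congrArg (ZMod.castHom h4 (ZMod 4)) h
  simp only [map_add, map_sub, map_one, map_zero] at h'
  exact (by decide : ∀ t u : ZMod 4, t + t - (u + u - 1) + (t + t - (u + u - 1)) ≠ 0) _ _ h'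

theorem conj_smul_centralizer_sr {C : Type*} [Group C] (t a : ZMod N) :
    MulAut.conj ((r t, 1) : DihedralGroup N × C) • Subgroup.centralizer {((sr a, 1) : _ × C)} =
      Subgroup.centralizer {((sr (a - t - t), 1) : DihedralGroup N × C)} := by
  rw [MulAut.conj_smul_centralizer_singleton, Prod.inv_mk, Prod.mk_mul_mk, Prod.mk_mul_mk,
    conj_r_sr, mul_one, inv_one, mul_one]

theorem exists_sr_of_injective [NeZero N] {C : Type*} [Group C] [Finite C]
    (φ : Multiplicative (ZMod 2) × Multiplicative (ZMod 2) × C →* DihedralGroup N × C)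
    (hφ : Function.Injective φ) : ∃ v a, (φ v).1 = sr a := by
  classical
  by_contra! hrot
  set T : Set C := {c | c ^ 2 = 1}
  set I : Set (ZMod N) := {i | i + i = 0}
  have hT : 0 < T.ncard := (Set.ncard_pos T.toFinite).mpr ⟨1, one_pow 2⟩
  have hI : I.ncard ≤ 2 := by
    rw [Set.ncard_eq_toFinset_card', Set.toFinset_ofPred]
    simpa only [two_nsmul] using IsAddCyclic.card_nsmul_eq_zero_le (α := ZMod N) two_pos
  have hsq : {v : Multiplicative (ZMod 2) × Multiplicative (ZMod 2) × C | v ^ 2 = 1} =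
      Set.univ ×ˢ Set.univ ×ˢ T := by
    have h2 : ∀ a : Multiplicative (ZMod 2), a ^ 2 = 1 := by decide
    ext ⟨a, b, c⟩
    simp [T, Prod.ext_iff, h2]
  have himage : φ '' {v | v ^ 2 = 1} ⊆ (fun p : ZMod N × C => (r p.1, p.2)) '' I ×ˢ T := by
    rintro _ ⟨v, hv, rfl⟩
    have hφv : φ v ^ 2 = 1 := by rw [← map_pow, Set.mem_ofPred_eq.mp hv, map_one]
    rw [sq, Prod.ext_iff] at hφv
    obtain ⟨i, hi⟩ : ∃ i, (φ v).1 = r i := by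
      rcases h : (φ v).1 with i | a
      · exact ⟨i, rfl⟩
      · exact absurd h (hrot v a)
    refine ⟨(i, (φ v).2), ⟨?_, ?_⟩, Prod.ext hi.symm rfl⟩
    · have h1 := hφv.1
      rwa [Prod.fst_mul, Prod.fst_one, hi, r_mul_r, one_def, r.injEq] at h1
    · simpa [sq, T] using hφv.2
  have hcard := Set.ncard_le_ncard himage ((I.toFinite.prod T.toFinite).image _)
  rw [Set.ncard_image_of_injective _ hφ, hsq] at hcard
  have h2 := (hcard.trans Set.ncard_image_le).trans_eq Set.ncard_prod
  simp only [Set.ncard_prod, Set.ncard_univ, Nat.card_eq_fintype_card, Fintype.card_multiplicative,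
    ZMod.card] at h2
  nlinarith

theorem eq_centralizer_sr_of_mulEquiv {M : ℕ} [NeZero N] (hN : N = 2 * M)
    {C : Type*} [CommGroup C] [Finite C] (S : Subgroup (DihedralGroup N × C))
    (φ : Multiplicative (ZMod 2) × Multiplicative (ZMod 2) × C ≃* S) :
    ∃ a : ZMod N, S = Subgroup.centralizer {(sr a, 1)} := by
  obtain ⟨v, a, hv⟩ := exists_sr_of_injective (S.subtype.comp φ.toMonoidHom)
    (Subtype.val_injective.comp φ.injective)
  refine ⟨a, Subgroup.eq_of_le_of_card_ge (fun p hp => ?_) ?_⟩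
  · have hcomm : Commute p (φ v) := by
      simpa using ((Commute.all (φ.symm ⟨p, hp⟩) v).map φ).map S.subtype
    rw [Subgroup.centralizer_singleton_mk_eq_prod, Subgroup.mem_prod, ← hv]
    exact ⟨Subgroup.mem_centralizer_singleton_iff.mpr (Prod.commute_iff.mp hcomm).1, trivial⟩
  · rw [Subgroup.centralizer_singleton_mk_eq_prod,
      Nat.card_congr (Subgroup.prodEquiv _ _).toEquiv, Nat.card_prod, Subgroup.card_top,
      ← Nat.card_congr φ.toEquiv, Nat.card_prod, Nat.card_prod]
    simp only [Nat.card_eq_fintype_card, Fintype.card_multiplicative, ZMod.card]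
    exact (Nat.mul_le_mul_right _ (card_centralizer_sr_le_s5 hN a)).trans_eq (by ring)

theorem closure_eq_centralizer_sr {M k : ℕ} (hN : N = 2 * M) (a : ZMod N) :
    Subgroup.closure {((r M, 1) : DihedralGroup N × Multiplicative (ZMod k)), (sr a, 1),
      (1, Multiplicative.ofAdd 1)} = Subgroup.centralizer {(sr a, 1)} := by
  rw [Subgroup.centralizer_singleton_mk_eq_prod]
  set X : Set (DihedralGroup N × Multiplicative (ZMod k)) :=
    {(r M, 1), (sr a, 1), (1, Multiplicative.ofAdd 1)}
  apply le_antisymm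
  · rw [Subgroup.closure_le]
    rintro _ (rfl | rfl | rfl) <;> simp only [SetLike.mem_coe, Subgroup.mem_prod,
      Subgroup.mem_top, and_true, Subgroup.mem_centralizer_singleton_iff, ← commute_iff_eq]
    · exact (commute_sr_iff hN).mpr (Or.inr (Or.inl rfl))
    · exact Commute.one_left _
  · rintro ⟨g, c⟩ hgc
    have hgen : ∀ p ∈ X, p ∈ Subgroup.closure X := fun p hp => Subgroup.subset_closure hp
    obtain ⟨j, hj⟩ := ZMod.intCast_surjective (Multiplicative.toAdd c)
    have hc : ((1, c) : DihedralGroup N × Multiplicative (ZMod k)) =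
        (1, Multiplicative.ofAdd 1) ^ j := by
      rw [Prod.pow_mk, one_zpow, ← ofAdd_zsmul, zsmul_one, hj, ofAdd_toAdd]
    have hg : ((g, 1) : DihedralGroup N × Multiplicative (ZMod k)) ∈ Subgroup.closure X := by
      have hg := Subgroup.mem_centralizer_singleton_iff.mp (Subgroup.mem_prod.mp hgc).1
      rcases (commute_sr_iff hN).mp hg with rfl | rfl | rfl | rfl
      · exact one_mem _
      · exact hgen _ (by simp [X])
      · exact hgen _ (by simp [X])
      · rw [← sr_mul_r, ← one_mul (1 : Multiplicative (ZMod k)), ← Prod.mk_mul_mk]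
        exact mul_mem (hgen _ (by simp [X])) (hgen _ (by simp [X]))
    rw [← mul_one g, ← one_mul c, ← Prod.mk_mul_mk, hc]
    exact mul_mem hg (zpow_mem (hgen _ (by simp [X])) _)

end DihedralGroup

theorem stmt_5 (n m : ℕ) (hn : 3 ≤ n)
    (x y z : DC n m) (hx : x = (DihedralGroup.r 1, 1))
    (hy : y = (DihedralGroup.sr 0, 1))
    (hz : z = (1, Multiplicative.ofAdd 1))
    (Q₁ Q₂ : Subgroup (DC n m))
    (hQ₁ : Q₁ = Subgroup.closure {x ^ (2 ^ (n - 2)), y, z})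
    (hQ₂ : Q₂ = Subgroup.closure {x ^ (2 ^ (n - 2)), x * y, z}) :
    (∀ S : Subgroup (DC n m),
      Nonempty (S ≃* (Multiplicative (ZMod 2) × Multiplicative (ZMod 2) ×
        Multiplicative (ZMod (2 ^ m)))) →
      ∃ g : DC n m, MulAut.conj g • S = Q₁ ∨ MulAut.conj g • S = Q₂) ∧
    ¬ ∃ g : DC n m, MulAut.conj g • Q₁ = Q₂ := by
  subst hx hy hz hQ₁ hQ₂
  have hN : 2 ^ (n - 1) = 2 * 2 ^ (n - 2) := by rw [← pow_succ']; congr 1; omega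
  have h4 : 4 ∣ 2 ^ (n - 1) := pow_dvd_pow 2 (by omega : 2 ≤ n - 1)
  have hpow : ((r 1, 1) : DC n m) ^ 2 ^ (n - 2) = (r (2 ^ (n - 2) : ℕ), 1) := by
    simp [Prod.pow_mk]
  have hxy : ((r 1, 1) : DC n m) * (sr 0, 1) = (sr (-1), 1) := by
    simp [r_mul_sr]
  rw [hpow, hxy, closure_eq_centralizer_sr hN, closure_eq_centralizer_sr hN]
  refine ⟨fun S ⟨φ⟩ => ?_, ?_⟩
  · obtain ⟨a, rfl⟩ := eq_centralizer_sr_of_mulEquiv hN S φ.symm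
    obtain ⟨t, rfl | rfl⟩ := ZMod.exists_eq_add_self_or_eq_add_self_sub_one a
    · exact ⟨(r t, 1), Or.inl (by rw [conj_smul_centralizer_sr]; ring_nf)⟩
    · exact ⟨(r t, 1), Or.inr (by rw [conj_smul_centralizer_sr]; ring_nf)⟩
  · rintro ⟨g, hg⟩
    obtain ⟨t, ht⟩ := exists_conj_sr_zero g.1
    have hself : g * (sr 0, 1) * g⁻¹ ∈ MulAut.conj g • Subgroup.centralizer {(sr 0, 1)} := by
      rw [MulAut.conj_smul_centralizer_singleton]
      exact Subgroup.mem_centralizer_singleton_iff.mpr rfl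
    rw [hg, Subgroup.centralizer_singleton_mk_eq_prod, Subgroup.mem_prod] at hself
    have hcomm : Commute (sr (t + t)) (sr (0 + 0 - 1)) := by
      rw [← ht, zero_add, zero_sub]
      exact Subgroup.mem_centralizer_singleton_iff.mp hself.1
    exact not_commute_sr_add_self_sr_add_self_sub_one h4 t 0 hcomm
end

section
/- Let Q = C_2 × C_2 × C_{2^m} with m ≥ 0 and m ≠ 1. Then |Aut(Q)| = 2^k · 3 for some natural number k; in particular the only prime divisors of |Aut(Q)| are 2 and 3. -/
/-!
Write `Q = V × C` with `V = C₂²` and `C = C_{2^m}`, so that an endomorphism of `Q` is a block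
matrix `[[α, β], [γ, δ]]` with `β : C → V` and `γ : V → C`. Since `γ` lands in the 2-torsion
of `C`, which for `m ≠ 1` consists of doubles, and `β` kills doubles, every composite `β γ`
vanishes.
This forces the block matrix to be invertible exactly when `α` and `δ` are, whence
`|Aut Q| = |GL₂(𝔽₂)| · |Hom(C, V)| · |Hom(V, C)| · |Aut C| = 6 · 2^a · 2^b · φ(2^m)`.
-/

open Function

noncomputable def AddAut.equivSubtypeBijective (X : Type*) [AddMonoid X] :
    AddAut X ≃ {f : X →+ X // Bijective f} where
  toFun e := ⟨e.toAddMonoidHom, e.bijective⟩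
  invFun f := .ofBijective f.1 f.2
  left_inv _ := AddEquiv.ext fun _ => rfl
  right_inv _ := rfl

instance AddMonoidHom.finite {A B : Type*} [AddZeroClass A] [AddZeroClass B] [Finite A]
    [Finite B] : Finite (A →+ B) :=
  Finite.of_injective _ DFunLike.coe_injective

namespace AddMonoidHom

variable {A B : Type*} [AddCommGroup A] [AddCommGroup B]

def ofBlocks (α : A →+ A) (β : B →+ A) (γ : A →+ B) (δ : B →+ B) : A × B →+ A × B :=
  (α.coprod β).prod (γ.coprod δ)

@[simp]
lemma ofBlocks_apply (α : A →+ A) (β : B →+ A) (γ : A →+ B) (δ : B →+ B) (x : A × B) :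
    ofBlocks α β γ δ x = (α x.1 + β x.2, γ x.1 + δ x.2) := rfl

def blocksEquiv :
    (A →+ A) × (B →+ A) × (A →+ B) × (B →+ B) ≃ (A × B →+ A × B) where
  toFun q := ofBlocks q.1 q.2.1 q.2.2.1 q.2.2.2
  invFun f := ((fst A B).comp (f.comp (inl A B)), (fst A B).comp (f.comp (inr A B)),
    (snd A B).comp (f.comp (inl A B)), (snd A B).comp (f.comp (inr A B)))
  left_inv q := by ext <;> simp
  right_inv f := by
    ext x <;> simp [← Prod.fst_add, ← Prod.snd_add, ← map_add]

lemma comp_eq_zero_of_two_torsion_subset_doubles (hA : ∀ a : A, a + a = 0)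
    (hB : ∀ b : B, b + b = 0 → ∃ c, b = c + c) (β : B →+ A) (γ : A →+ B) :
    β.comp γ = 0 := by
  ext a
  obtain ⟨c, hc⟩ := hB (γ a) (by rw [← map_add, hA, map_zero])
  simp [hc, hA]

lemma bijective_ofBlocks_iff [Finite A] [Finite B]
    (hAB : ∀ (β : B →+ A) (γ : A →+ B), β.comp γ = 0)
    (α : A →+ A) (β : B →+ A) (γ : A →+ B) (δ : B →+ B) :
    Bijective (ofBlocks α β γ δ) ↔ Bijective α ∧ Bijective δ := by
  constructor
  · intro hf
    let g : A × B →+ A × B := (AddEquiv.ofBijective _ hf).symm.toAddMonoidHom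
    have hfg (x : A × B) : ofBlocks α β γ δ (g x) = x :=
      (AddEquiv.ofBijective _ hf).apply_symm_apply x
    refine ⟨Finite.surjective_iff_bijective.mp fun a => ?_,
      Finite.surjective_iff_bijective.mp fun b => ?_⟩
    · refine ⟨(g (a, 0)).1, ?_⟩
      have h1 : α (g (a, 0)).1 + β (g (a, 0)).2 = a := congrArg Prod.fst (hfg (a, 0))
      have h2 : β (g (a, 0)).2 = 0 :=
        DFunLike.congr_fun (hAB β ((snd A B).comp (g.comp (inl A B)))) a
      rwa [h2, add_zero] at h1
    · let β' := (fst A B).comp (g.comp (inr A B))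
      -- writing `g = [[α', β'], [γ', δ']]`, we have `δ δ' = 1 - γ β'` and `β' γ = 0`,
      -- so `δ' (1 + γ β')` is a right inverse of `δ`
      let y := b + γ (β' b)
      have h1 : γ (β' y) + δ (g (0, y)).2 = y := congrArg Prod.snd (hfg (0, y))
      have h2 : β' (γ (β' b)) = 0 := DFunLike.congr_fun (hAB β' γ) (β' b)
      refine ⟨(g (0, y)).2, ?_⟩
      rw [map_add, h2, add_zero] at h1
      exact add_left_cancel (h1.trans (add_comm _ _))
  · rintro ⟨hα, hδ⟩
    rw [← Finite.injective_iff_bijective, injective_iff_map_eq_zero]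
    rintro ⟨a, b⟩ h
    have h1 : α a + β b = 0 := congrArg Prod.fst h
    have h2 : γ a + δ b = 0 := congrArg Prod.snd h
    let e := AddEquiv.ofBijective δ hδ
    have hb : b = -e.symm (γ a) := e.injective (by simpa [e] using eq_neg_of_add_eq_zero_right h2)
    have hβb : β b = 0 := by
      simpa [hb] using DFunLike.congr_fun (hAB β (e.symm.toAddMonoidHom.comp γ)) a
    have ha : a = 0 := hα.injective (by rwa [hβb, add_zero, ← map_zero α] at h1)
    have hb0 : b = 0 := hδ.injective (by rwa [ha, map_zero, zero_add, ← map_zero δ] at h2)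
    rw [ha, hb0, Prod.mk_zero_zero]

lemma card_addAut_prod [Finite A] [Finite B]
    (hAB : ∀ (β : B →+ A) (γ : A →+ B), β.comp γ = 0) :
    Nat.card (AddAut (A × B)) =
      Nat.card (AddAut A) *
        (Nat.card (B →+ A) * (Nat.card (A →+ B) * Nat.card (AddAut B))) := by
  let invertibleBlocks :
      {q : (A →+ A) × (B →+ A) × (A →+ B) × (B →+ B) //
        Bijective q.1 ∧ Bijective q.2.2.2} ≃
        AddAut A × (B →+ A) × (A →+ B) × AddAut B :=
    { toFun q := (.ofBijective q.1.1 q.2.1, q.1.2.1, q.1.2.2.1, .ofBijective q.1.2.2.2 q.2.2)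
      invFun x := ⟨(x.1, x.2.1, x.2.2.1, x.2.2.2), x.1.bijective, x.2.2.2.bijective⟩
      left_inv _ := rfl
      right_inv _ := by ext <;> rfl }
  let e : AddAut (A × B) ≃ AddAut A × (B →+ A) × (A →+ B) × AddAut B :=
    ((AddAut.equivSubtypeBijective (A × B)).trans
      (blocksEquiv.subtypeEquiv fun q => (bijective_ofBlocks_iff hAB _ _ _ _).symm).symm).trans
      invertibleBlocks
  simp only [Nat.card_congr e, Nat.card_prod]

end AddMonoidHom

lemma exists_card_eq_two_pow_of_add_self_eq_zero {G : Type*} [AddCommGroup G] [Finite G]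
    (h : ∀ x : G, x + x = 0) : ∃ k, Nat.card G = 2 ^ k := by
  let := AddCommGroup.zmodModule (n := 2) fun x : G => by rw [two_nsmul, h]
  have := Fintype.ofFinite G
  exact ⟨Module.finrank (ZMod 2) G, by
    rw [Nat.card_eq_fintype_card, Module.card_eq_pow_finrank (K := ZMod 2), ZMod.card]⟩

lemma ZMod.exists_eq_add_self_of_add_self_eq_zero {m : ℕ} (hm : m ≠ 1) (b : ZMod (2 ^ m))
    (hb : b + b = 0) : ∃ c, b = c + c := by
  obtain _ | _ | k := m
  · exact ⟨0, Subsingleton.elim (α := ZMod 1) _ _⟩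
  · exact absurd rfl hm
  obtain ⟨t, ht⟩ : 2 ^ (k + 1) ∣ b.val := by
    have h2b : 2 * 2 ^ (k + 1) ∣ 2 * b.val := by
      rw [← pow_succ', ← ZMod.natCast_eq_zero_iff]
      push_cast
      rw [ZMod.natCast_zmod_val, two_mul, hb]
    exact Nat.dvd_of_mul_dvd_mul_left two_pos h2b
  refine ⟨(2 ^ k * t : ℕ), ?_⟩
  rw [← ZMod.natCast_zmod_val b, ht]
  push_cast
  ring

lemma ZMod.card_addAut (n : ℕ) [NeZero n] : Nat.card (AddAut (ZMod n)) = n.totient := by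
  rw [Nat.card_congr (ZMod.AddAutEquivUnits n).toEquiv, Nat.card_congr Additive.toMul,
    Nat.card_eq_fintype_card, ZMod.card_units_eq_totient]

lemma ZMod.exists_card_addAut_two_pow_eq_two_pow (m : ℕ) :
    ∃ k, Nat.card (AddAut (ZMod (2 ^ m))) = 2 ^ k := by
  rw [ZMod.card_addAut]
  obtain _ | k := m
  · exact ⟨0, Nat.totient_one⟩
  · exact ⟨k, by rw [Nat.totient_prime_pow_succ Nat.prime_two]; norm_num⟩

lemma exists_card_addAut_eq_two_pow_mul_three {m : ℕ} (hm : m ≠ 1) :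
    ∃ k, Nat.card (AddAut ((ZMod 2 × ZMod 2) × ZMod (2 ^ m))) = 2 ^ k * 3 := by
  have hV : ∀ v : ZMod 2 × ZMod 2, v + v = 0 := by decide
  have hGL : Nat.card (AddAut (ZMod 2 × ZMod 2)) = 6 := by
    rw [Nat.card_eq_fintype_card]
    decide
  obtain ⟨a, ha⟩ := exists_card_eq_two_pow_of_add_self_eq_zero
    fun β : ZMod (2 ^ m) →+ ZMod 2 × ZMod 2 => by ext x <;> simp [hV]
  obtain ⟨b, hb⟩ := exists_card_eq_two_pow_of_add_self_eq_zero
    fun γ : ZMod 2 × ZMod 2 →+ ZMod (2 ^ m) => by ext v; simp [← map_add, hV]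
  obtain ⟨c, hc⟩ := ZMod.exists_card_addAut_two_pow_eq_two_pow m
  refine ⟨1 + a + b + c, ?_⟩
  rw [AddMonoidHom.card_addAut_prod (AddMonoidHom.comp_eq_zero_of_two_torsion_subset_doubles hV
    (ZMod.exists_eq_add_self_of_add_self_eq_zero hm)), hGL, ha, hb, hc]
  ring

theorem stmt_8 (m : ℕ) (hm : m ≠ 1) :
    ∃ k : ℕ, Nat.card (MulAut (Multiplicative (ZMod 2) × Multiplicative (ZMod 2) ×
      Multiplicative (ZMod (2 ^ m)))) = 2 ^ k * 3 := by
  obtain ⟨k, hk⟩ := exists_card_addAut_eq_two_pow_mul_three hm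
  refine ⟨k, hk ▸ Nat.card_congr ?_⟩
  let e : Multiplicative (ZMod 2) × Multiplicative (ZMod 2) × Multiplicative (ZMod (2 ^ m)) ≃*
      Multiplicative ((ZMod 2 × ZMod 2) × ZMod (2 ^ m)) :=
    ((MulEquiv.refl _).prodCongr (MulEquiv.prodMultiplicative _ _).symm).trans <|
      (MulEquiv.prodMultiplicative _ _).symm.trans
        (AddEquiv.toMultiplicative AddEquiv.prodAssoc.symm)
  exact (MulAut.congr e).toEquiv.trans AddEquiv.toMultiplicative.symm
end

section
/- Let D = ⟨x, y, z⟩ ≅ D_{2^n} × C_{2^m} with n ≥ 3, and let Q ∈ {Q₁, Q₂} where Q₁ = ⟨x^{2^{n-2}}, y, z⟩ and Q₂ = ⟨x^{2^{n-2}}, x y, z⟩. Suppose A ≤ Aut(Q) contains the automorphism β induced by conjugation by x^{2^{n-3}}, and α ∈ A has order 3 with β α β⁻¹ = α⁻¹ and C_Q(α) ≤ Z(D). Then for every u ∈ Q \ Z(D), some conjugate of β in ⟨α, β⟩ fixes u; in particular the stabilizer of u in ⟨α, β⟩ has even order. -/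
open DihedralGroup

theorem DihedralGroup.inv_r' {N : ℕ} (i : ZMod N) : (r i)⁻¹ = r (-i) := rfl
theorem DihedralGroup.inv_sr' {N : ℕ} (i : ZMod N) : (sr i)⁻¹ = sr i := rfl

/-- The subgroup `{r 0, r h, sr j₀, sr (j₀+h)}` of a dihedral group, when `h + h = 0`. -/
def Sgrp (N : ℕ) (j₀ h : ZMod N) (hh : h + h = 0) : Subgroup (DihedralGroup N) where
  carrier := {r 0, r h, sr j₀, sr (j₀ + h)}
  one_mem' := by left; exact one_def
  inv_mem' := by
    have hneg : -h = h := neg_eq_of_add_eq_zero_left hh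
    rintro a (rfl | rfl | rfl | rfl) <;>
      simp [Set.mem_insert_iff, DihedralGroup.inv_r', DihedralGroup.inv_sr', hneg]
  mul_mem' := by
    have hneg : -h = h := neg_eq_of_add_eq_zero_left hh
    have hj : j₀ - h = j₀ + h := by linear_combination -hh
    have hjj : j₀ + h + h = j₀ := by linear_combination hh
    rintro a b (rfl | rfl | rfl | rfl) (rfl | rfl | rfl | rfl) <;>
      simp only [r_mul_r, r_mul_sr, sr_mul_r, sr_mul_sr, Set.mem_insert_iff,
        Set.mem_singleton_iff, r.injEq, sr.injEq, reduceCtorEq, false_or, or_false,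
        zero_add, add_zero, sub_zero, sub_self, add_sub_cancel_right, add_sub_cancel_left,
        sub_add_cancel_left, hneg, hj, hjj, hh] <;>
      tauto

section aux

variable (n m : ℕ)

/-- A pair whose first component is a rotation `r j` with `j + j = 0` is central. -/
theorem rot_central (j : ZMod (2 ^ (n - 1))) (hj : j + j = 0)
    (c : Multiplicative (ZMod (2 ^ m))) :
    ((r j, c) : DC n m) ∈ Subgroup.center (DC n m) := by
  have hneg : -j = j := neg_eq_of_add_eq_zero_left hj
  rw [Subgroup.mem_center_iff]
  rintro ⟨a | a, b⟩ <;>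
    refine Prod.ext ?_ (mul_comm _ _) <;>
    simp [r_mul_r, sr_mul_r, r_mul_sr, add_comm, sub_eq_add_neg, hneg]

/-- A pair whose first component is a reflection is not central. -/
theorem refl_not_central (hn : 3 ≤ n) (j : ZMod (2 ^ (n - 1)))
    (c : Multiplicative (ZMod (2 ^ m))) :
    ((sr j, c) : DC n m) ∉ Subgroup.center (DC n m) := by
  intro hc
  rw [Subgroup.mem_center_iff] at hc
  have h2 : ((2 : ℕ) : ZMod (2 ^ (n - 1))) ≠ 0 := by
    rw [Ne, ZMod.natCast_eq_zero_iff]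
    intro hdvd
    have := Nat.le_of_dvd (by norm_num) hdvd
    have : 4 ≤ 2 ^ (n - 1) := by
      calc 4 = 2 ^ 2 := by norm_num
      _ ≤ 2 ^ (n - 1) := Nat.pow_le_pow_right (by norm_num) (by omega)
    omega
  have := hc ((r 1, 1) : DC n m)
  have h1 : sr (j + 1) = sr (j - 1) := by
    have := congrArg Prod.fst this
    simpa [r_mul_sr, sr_mul_r] using this.symm
  have : (j : ZMod (2 ^ (n-1))) + 1 = j - 1 := by
    simpa [sr.injEq] using h1
  apply h2
  push_cast
  linear_combination this

end aux

theorem stmt_18 (n m : ℕ) (hn : 3 ≤ n)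
    (x y z : DC n m) (hx : x = (DihedralGroup.r 1, 1))
    (hy : y = (DihedralGroup.sr 0, 1))
    (hz : z = (1, Multiplicative.ofAdd 1))
    (Q : Subgroup (DC n m))
    (hQ : Q = Subgroup.closure {x ^ (2 ^ (n - 2)), y, z} ∨
          Q = Subgroup.closure {x ^ (2 ^ (n - 2)), x * y, z})
    (α β : MulAut Q)
    (hβ : ∀ q : Q, ((β q : DC n m)) = x ^ (2 ^ (n - 3)) * q * (x ^ (2 ^ (n - 3)))⁻¹)
    (hα : orderOf α = 3)
    (hrel : β * α * β⁻¹ = α⁻¹)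
    (hfix : ∀ q : Q, α q = q → (q : DC n m) ∈ Subgroup.center (DC n m))
    (u : Q) (hu : (u : DC n m) ∉ Subgroup.center (DC n m)) :
    (∃ δ ∈ Subgroup.closure {α, β}, (δ * β * δ⁻¹) u = u) ∧
    Even (Nat.card (MulAction.stabilizer (Subgroup.closure {α, β}) u)) := by
  -- basic numerology
  set N := 2 ^ (n - 1) with hN
  have hpow : ∀ k : ℕ, x ^ k = ((r (k : ZMod N) : DihedralGroup N), 1) := by
    intro k
    rw [hx]
    rw [Prod.pow_mk, one_pow, r_one_pow]
  set h : ZMod N := ((2 ^ (n - 2) : ℕ) : ZMod N) with hdefh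
  have hh : h + h = 0 := by
    rw [hdefh, ← Nat.cast_add]
    have : 2 ^ (n - 2) + 2 ^ (n - 2) = N := by
      rw [hN]
      have h1 : n - 1 = (n - 2) + 1 := by omega
      rw [h1, pow_succ]
      ring
    rw [this, ZMod.natCast_self]
  have hhne : h ≠ 0 := by
    rw [hdefh]
    rw [Ne, ZMod.natCast_eq_zero_iff]
    intro hdvd
    have h1 : 2 ^ (n - 1) ≤ 2 ^ (n - 2) := Nat.le_of_dvd (by positivity) hdvd
    have h2 : 2 ^ (n - 2) < 2 ^ (n - 1) := Nat.pow_lt_pow_right (by norm_num) (by omega)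
    omega
  -- Q is contained in an explicit subgroup
  obtain ⟨j₀, hQle⟩ : ∃ j₀ : ZMod N, Q ≤ (Sgrp N j₀ h hh).prod ⊤ := by
    rcases hQ with rfl | rfl
    · refine ⟨0, Subgroup.closure_le _ |>.2 ?_⟩
      rintro q (rfl | rfl | rfl)
      · rw [hpow]
        exact ⟨by right; left; rfl, trivial⟩
      · rw [hy]
        exact ⟨by right; right; left; simp, trivial⟩
      · rw [hz]
        exact ⟨by left; rfl, trivial⟩
    · refine ⟨-1, Subgroup.closure_le _ |>.2 ?_⟩
      rintro q (rfl | rfl | rfl)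
      · rw [hpow]
        exact ⟨by right; left; rfl, trivial⟩
      · rw [hx, hy]
        refine ⟨?_, trivial⟩
        right; right; left
        simp [r_mul_sr]
      · rw [hz]
        exact ⟨by left; rfl, trivial⟩
  -- classification of elements of Q
  have hclass : ∀ q : Q, (q : DC n m) ∈ Subgroup.center (DC n m) ∨
      ∃ i : ZMod N, (i = j₀ ∨ i = j₀ + h) ∧ (q : DC n m).1 = sr i := by
    intro q
    have hq := hQle q.2
    rw [Subgroup.mem_prod] at hq
    obtain ⟨h1, -⟩ := hq
    have hq2 : (q : DC n m) = ((q : DC n m).1, (q : DC n m).2) := rfl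
    rcases h1 with h1 | h1 | h1 | h1
    · left; rw [hq2, h1]; exact rot_central n m 0 (by simp) _
    · left; rw [hq2, h1]; exact rot_central n m h hh _
    · right; exact ⟨j₀, Or.inl rfl, h1⟩
    · right; exact ⟨j₀ + h, Or.inr rfl, h1⟩
  -- β fixes central elements of Q
  have hβcen : ∀ q : Q, (q : DC n m) ∈ Subgroup.center (DC n m) → β q = q := by
    intro q hq
    have := hβ q
    rw [Subgroup.mem_center_iff] at hq
    rw [hq (x ^ 2 ^ (n - 3)), mul_assoc, mul_inv_cancel, mul_one] at this
    exact Subtype.ext this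
  -- α ^ 3 = 1 pointwise
  have hα3 : ∀ q : Q, α (α (α q)) = q := by
    intro q
    have h1 : α ^ 3 = 1 := by rw [← hα]; exact pow_orderOf_eq_one α
    have := congrArg (fun f : MulAut Q => f q) h1
    simpa [pow_succ, MulAut.mul_apply] using this
  set v : Q := α u with hv
  set w : Q := α v with hw
  have hwu : α w = u := hα3 u
  -- at least one of v, w is central
  have hvw : (v : DC n m) ∈ Subgroup.center (DC n m) ∨
      (w : DC n m) ∈ Subgroup.center (DC n m) := by
    by_contra hcon
    push_neg at hcon
    obtain ⟨hvnc, hwnc⟩ := hcon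
    obtain ⟨i₁, hi₁, hv1⟩ := (hclass v).resolve_left hvnc
    obtain ⟨i₂, hi₂, hw1⟩ := (hclass w).resolve_left hwnc
    -- v * w is central
    have hvwcen : ((v * w : Q) : DC n m) ∈ Subgroup.center (DC n m) := by
      have : ((v * w : Q) : DC n m) = (sr i₁ * sr i₂, (v : DC n m).2 * (w : DC n m).2) := by
        rw [Subgroup.coe_mul]
        refine Prod.ext ?_ rfl
        simp [hv1, hw1]
      rw [this, sr_mul_sr]
      apply rot_central
      rcases hi₁ with rfl | rfl <;> rcases hi₂ with rfl | rfl <;>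
        first
          | (simp; done)
          | linear_combination hh
          | linear_combination -hh
    -- so s := u * (v * w) is fixed by α
    have hcomm : ∀ q : Q, q * (v * w) = (v * w) * q := by
      intro q
      rw [Subgroup.mem_center_iff] at hvwcen
      exact Subtype.ext (hvwcen q)
    have hs : α (u * (v * w)) = u * (v * w) := by
      have : α (u * (v * w)) = v * (w * u) := by
        rw [map_mul, map_mul, hwu, ← hv, ← hw]
      rw [this, ← mul_assoc, hcomm u]
    have := hfix _ hs
    apply hu
    have hu_eq : (u : DC n m) = ((u * (v * w) : Q) : DC n m) * (((v * w : Q) : DC n m))⁻¹ := by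
      rw [Subgroup.coe_mul, mul_assoc, mul_inv_cancel, mul_one]
    rw [hu_eq]
    exact Subgroup.mul_mem _ this (Subgroup.inv_mem _ hvwcen)
  -- existence of the conjugate of β fixing u
  have hαmem : α ∈ Subgroup.closure {α, β} :=
    Subgroup.subset_closure (by left; rfl)
  obtain ⟨δ, hδmem, hδu⟩ : ∃ δ ∈ Subgroup.closure {α, β}, (δ * β * δ⁻¹) u = u := by
    rcases hvw with hc | hc
    · refine ⟨α⁻¹, Subgroup.inv_mem _ hαmem, ?_⟩
      rw [inv_inv]
      rw [MulAut.mul_apply, MulAut.mul_apply]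
      rw [← hv, hβcen v hc, hv]
      exact α.injective (by rw [MulAut.apply_inv_self])
    · refine ⟨α, hαmem, ?_⟩
      rw [MulAut.mul_apply, MulAut.mul_apply]
      have h1 : α⁻¹ u = w := by
        apply α.injective
        rw [MulAut.apply_inv_self, hwu]
      rw [h1, hβcen w hc, hwu]
  refine ⟨⟨δ, hδmem, hδu⟩, ?_⟩
  -- the Even part
  -- u is a reflection
  obtain ⟨j, hj, hu1⟩ := (hclass u).resolve_left hu
  -- β ≠ 1 since β u ≠ u
  have hβu : β u ≠ u := by
    intro hfixu
    have := hβ u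
    rw [hfixu] at this
    have hx2 : x ^ 2 ^ (n - 3) * (u : DC n m) * (x ^ 2 ^ (n - 3))⁻¹ = (u : DC n m) := this.symm
    set g : ZMod N := ((2 ^ (n - 3) : ℕ) : ZMod N) with hgdef
    have hgg : g + g = h := by
      rw [hgdef, hdefh, ← Nat.cast_add]
      congr 1
      have : n - 2 = (n - 3) + 1 := by omega
      rw [this, pow_succ]
      ring
    rw [hpow] at hx2
    have hfst := congrArg Prod.fst hx2
    simp only [Prod.inv_mk, Prod.mul_def, DihedralGroup.inv_r'] at hfst
    rw [hu1] at hfst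
    rw [r_mul_sr, sr_mul_r] at hfst
    have h3 : j - (2 : ZMod N) ^ (n - 3) + -(2 : ZMod N) ^ (n - 3) = j := by
      simpa using hfst
    apply hhne
    have hcast : h = (2 : ZMod N) ^ (n - 2) := by rw [hdefh]; push_cast; ring
    rw [hcast, show n - 2 = (n - 3) + 1 from by omega, pow_succ]
    linear_combination -h3
  have hβ2 : β * β = 1 := by
    refine MulEquiv.ext fun q => ?_
    rw [MulAut.mul_apply, MulAut.one_apply]
    have h1 := hβ (β q)
    rw [hβ q] at h1
    have h2 : ((β (β q)) : DC n m) =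
        (x ^ 2 ^ (n - 3) * x ^ 2 ^ (n - 3)) * (q : DC n m) *
          (x ^ 2 ^ (n - 3) * x ^ 2 ^ (n - 3))⁻¹ := by
      rw [h1]; group
    have hxx : x ^ 2 ^ (n - 3) * x ^ 2 ^ (n - 3) = x ^ 2 ^ (n - 2) := by
      rw [← pow_add]
      congr 1
      have : n - 2 = (n - 3) + 1 := by omega
      rw [this, pow_succ]; ring
    have hTc : x ^ 2 ^ (n - 2) ∈ Subgroup.center (DC n m) := by
      rw [hpow]
      exact rot_central n m _ hh _
    rw [hxx] at h2
    rw [Subgroup.mem_center_iff] at hTc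
    rw [← hTc (q : DC n m), mul_assoc, mul_inv_cancel, mul_one] at h2
    exact Subtype.ext h2
  -- the conjugate has order two inside the stabilizer
  set K := Subgroup.closure {α, β} with hK
  have hβK : β ∈ K := Subgroup.subset_closure (by right; rfl)
  have heK : δ * β * δ⁻¹ ∈ K := by
    exact Subgroup.mul_mem _ (Subgroup.mul_mem _ hδmem hβK) (Subgroup.inv_mem _ hδmem)
  have hstab : (⟨δ * β * δ⁻¹, heK⟩ : K) ∈ MulAction.stabilizer K u := by
    rw [MulAction.mem_stabilizer_iff]
    show (δ * β * δ⁻¹) • u = u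
    rw [MulAut.smul_def]
    exact hδu
  have horder : orderOf (⟨⟨δ * β * δ⁻¹, heK⟩, hstab⟩ : MulAction.stabilizer K u) = 2 := by
    rw [Subgroup.orderOf_mk, Subgroup.orderOf_mk]
    have hββ : ∀ g : MulAut Q, β * (β * g) = g := fun g => by
      rw [← mul_assoc, hβ2, one_mul]
    have hp : (δ * β * δ⁻¹) ^ 2 = 1 := by
      rw [pow_two]
      simp [mul_assoc, hββ]
    have hne : δ * β * δ⁻¹ ≠ 1 := by
      intro hcon
      have : β = 1 := by
        have := congrArg (fun g => δ⁻¹ * g * δ) hcon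
        simpa [mul_assoc] using this
      rw [this] at hβu
      exact hβu rfl
    exact orderOf_eq_prime hp hne
  rw [even_iff_two_dvd]
  have hdvd := orderOf_dvd_natCard (⟨⟨δ * β * δ⁻¹, heK⟩, hstab⟩ : MulAction.stabilizer K u)
  rw [horder] at hdvd
  exact hdvd
end
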